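/- arXiv:1908.02845 — 5 statements merged into one kernel-verified Lean document; each statement's English description precedes it below -/
import Mathlib

section
/- For every metric space X, every natural number n ≥ 1 and every F ∈ 𝒦(X), the sets 𝒜_n(X) and 𝒜_n(X,F) are F_σδ subsets of 𝒦(X). -/
open TopologicalSpace Filter Set

/-- `𝒜_n(X) = {A ∈ 𝒦(X) : 1 ≤ |A'| ≤ n}` where `A'` is the derived set of `A` in `X`. -/
def An (X : Type*) [MetricSpace X] (n : ℕ) : Set (NonemptyCompacts X) :=
  {A | 1 ≤ (derivedSet (A : Set X)).ncard ∧ (derivedSet (A : Set X)).ncard ≤ n}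

/-- `𝒜_n(X,F) = {A ∈ 𝒜_n(X) : A' ⊆ F}`. -/
def AnF (X : Type*) [MetricSpace X] (n : ℕ) (F : Set X) : Set (NonemptyCompacts X) :=
  {A | A ∈ An X n ∧ derivedSet (A : Set X) ⊆ F}

/-- `𝒜_ω(X) = {A ∈ 𝒦(X) : A' is nonempty and finite}`. -/
def Aom (X : Type*) [MetricSpace X] : Set (NonemptyCompacts X) :=
  {A | (derivedSet (A : Set X)).Nonempty ∧ (derivedSet (A : Set X)).Finite}

/-- `𝒜_ω(X,F) = {A ∈ 𝒜_ω(X) : A' ⊆ F}`. -/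
def AomF (X : Type*) [MetricSpace X] (F : Set X) : Set (NonemptyCompacts X) :=
  {A | A ∈ Aom X ∧ derivedSet (A : Set X) ⊆ F}

/-- `𝒜_{ω+1}(X) = {A ∈ 𝒦(X) : A' is nonempty and countable}`. -/
def Aom1 (X : Type*) [MetricSpace X] : Set (NonemptyCompacts X) :=
  {A | (derivedSet (A : Set X)).Nonempty ∧ (derivedSet (A : Set X)).Countable}

/-- `ℋ(X) = {A ∈ 𝒦(X) : A countable}`. -/
def HH (X : Type*) [MetricSpace X] : Set (NonemptyCompacts X) :=
  {A | (A : Set X).Countable}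

/-- F_σ set: a countable union of closed sets. -/
def IsFsigma {Y : Type*} [TopologicalSpace Y] (S : Set Y) : Prop :=
  ∃ f : ℕ → Set Y, (∀ i, IsClosed (f i)) ∧ S = ⋃ i, f i

/-- F_σδ set: a countable intersection of F_σ sets. -/
def IsFsigmaDelta {Y : Type*} [TopologicalSpace Y] (S : Set Y) : Prop :=
  ∃ f : ℕ → Set Y, (∀ i, IsFsigma (f i)) ∧ S = ⋂ i, f i

/-- F_σδσ set: a countable union of F_σδ sets. -/
def IsFsigmaDeltaSigma {Y : Type*} [TopologicalSpace Y] (S : Set Y) : Prop :=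
  ∃ f : ℕ → Set Y, (∀ i, IsFsigmaDelta (f i)) ∧ S = ⋃ i, f i

/-- G_δσ set: a countable union of G_δ sets. -/
def IsGdeltaSigma {Y : Type*} [TopologicalSpace Y] (S : Set Y) : Prop :=
  ∃ f : ℕ → Set Y, (∀ i, IsGδ (f i)) ∧ S = ⋃ i, f i

/-- G_δσδ set: a countable intersection of G_δσ sets. -/
def IsGdeltaSigmaDelta {Y : Type*} [TopologicalSpace Y] (S : Set Y) : Prop :=
  ∃ f : ℕ → Set Y, (∀ i, IsGdeltaSigma (f i)) ∧ S = ⋂ i, f i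

/-- A space is of the first category in itself if it is the union of countably many
subsets that are nowhere dense in it. -/
def FirstCategoryInItself (T : Type*) [TopologicalSpace T] : Prop :=
  ∃ f : ℕ → Set T, (∀ i, IsNowhereDense (f i)) ∧ (⋃ i, f i) = Set.univ

/-- A space is strongly homogeneous if any two nonempty clopen subsets are homeomorphic. -/
def StronglyHomogeneous (T : Type*) [TopologicalSpace T] : Prop :=
  ∀ U V : Set T, IsClopen U → IsClopen V → U.Nonempty → V.Nonempty → Nonempty (↥U ≃ₜ ↥V)

/-- The standard set `P₃` in the Cantor cube `{0,1}^ℕ`. -/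
def P3 : Set (ℕ → Bool) :=
  {x | ∀ n : ℕ, ∀ᶠ k in Filter.atTop, x (2 ^ n * (2 * k + 1)) = false}

/-- The standard set `S₄` in the Cantor cube `{0,1}^ℕ`. -/
def S4 : Set (ℕ → Bool) :=
  {x | ∀ᶠ n in Filter.atTop, ∀ᶠ k in Filter.atTop, x (2 ^ n * (2 * k + 1)) = false}

/-- The standard set `Π₃` in the Hilbert cube `[0,1]^ℕ`. -/
def Pi3 : Set (ℕ → ↥unitInterval) :=
  {x | ∀ n : ℕ, ∀ᶠ m in Filter.atTop, x (2 ^ n * (2 * m + 1)) = 0}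

/-- The standard set `Σ₄` in the Hilbert cube `[0,1]^ℕ`. -/
def Sigma4 : Set (ℕ → ↥unitInterval) :=
  {x | ∃ n₀ : ℕ, ∀ n ≥ n₀, ∀ᶠ m in Filter.atTop, x (2 ^ n * (2 * m + 1)) = 0}

/-- `c₀`: the space of real sequences converging to `0`, as a subspace of `ℝ^ℕ`
with the product topology. -/
def c0 : Set (ℕ → ℝ) := {x | Filter.Tendsto x Filter.atTop (nhds 0)}

/-!
For compact `A`, statements about the derived set `A'` reduce to finiteness statements about `A`
itself: `A'` is nonempty iff `A` is infinite; `|A'| ≤ n` iff for every `ε = 1/(k+1)` some `n`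
points of `A` leave only finitely many points of `A` at distance `> ε` from all of them; and
`A' ⊆ F` iff for every `ε` only finitely many points of `A` are at distance `> ε` from `F`.
Along a Hausdorff-convergent sequence `Aⱼ → B`, every point of `B` is a limit of points of `Aⱼ`,
so the number of points of the limit in an open region is at most the eventual number of points
of the `Aⱼ` there. Since tuples of points of the `Aⱼ` subconverge to tuples of points of `B`,
"some tuple of points of `A` leaves at most `m` points of `A` in a region depending openly on the
tuple" is therefore a closed condition on `A`, and quantifying over `k` and `m`
exhibits the three conditions as F_σδ (the first even as G_δ).
-/

open Metric Topology

theorem Set.exists_fin_tuple_mem_subset_range {X : Type*} {s A : Set X} {n : ℕ}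
    (hsA : s ⊆ A) (hA : A.Nonempty) (hs : s.encard ≤ n) :
    ∃ f : Fin n → X, (∀ i, f i ∈ A) ∧ s ⊆ range f := by
  obtain ⟨a, ha⟩ := hA
  obtain ⟨m, e, he, rfl⟩ := (finite_of_encard_le_coe hs).fin_param
  have hmn : m ≤ n := by simpa using he.encard_range.trans hs
  refine ⟨fun i => if h : (i : ℕ) < m then e ⟨i, h⟩ else a, fun i => ?_, ?_⟩
  · dsimp only
    split_ifs
    exacts [hsA (mem_range_self _), ha]
  · rintro _ ⟨j, rfl⟩
    exact ⟨⟨j, j.2.trans_le hmn⟩, dif_pos j.2⟩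

theorem Set.one_le_ncard_and_ncard_le_iff {α : Type*} {s : Set α} {n : ℕ} :
    1 ≤ s.ncard ∧ s.ncard ≤ n ↔ s.Nonempty ∧ s.encard ≤ n := by
  rw [encard_le_coe_iff_finite_ncard_le, Nat.one_le_iff_ne_zero]
  refine ⟨fun ⟨h0, hn⟩ => ⟨nonempty_of_ncard_ne_zero h0, finite_of_ncard_ne_zero h0, hn⟩,
    fun ⟨hne, hfin, hn⟩ => ⟨((ncard_pos hfin).2 hne).ne', hn⟩⟩

theorem Set.Finite.eventually_encard_le {α X : Type*} [TopologicalSpace X] [T2Space X]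
    {l : Filter α} {t : Set X} (ht : t.Finite) {s : α → Set X}
    (h : ∀ y ∈ t, ∃ z : α → X, Tendsto z l (𝓝 y) ∧ ∀ᶠ j in l, z j ∈ s j) :
    ∀ᶠ j in l, t.encard ≤ (s j).encard := by
  have h' : ∀ y, ∃ z : α → X, y ∈ t → Tendsto z l (𝓝 y) ∧ ∀ᶠ j in l, z j ∈ s j := fun y =>
    (em (y ∈ t)).elim (fun hy => (h y hy).imp fun _ hz _ => hz)
      fun hy => ⟨fun _ => y, fun h => (hy h).elim⟩
  choose z hz using h'
  have hinj : ∀ᶠ j in l, ∀ y ∈ t, ∀ y' ∈ t, y ≠ y' → z y j ≠ z y' j :=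
    ht.eventually_all.2 fun y hy => ht.eventually_all.2 fun y' hy' => by
      by_cases hyy' : y = y'
      · exact .of_forall fun _ h => (h hyy').elim
      · exact ((hz y hy).1.prodMk_nhds (hz y' hy').1).eventually
          (isClosed_diagonal.isOpen_compl.mem_nhds hyy') |>.mono fun _ hj _ => hj
  filter_upwards [hinj, ht.eventually_all.2 fun y hy => (hz y hy).2] with j hj hjs
  calc t.encard = ((z · j) '' t).encard :=
        (InjOn.encard_image fun y hy y' hy' => not_imp_not.1 (hj y hy y' hy')).symm
    _ ≤ (s j).encard := encard_mono (image_subset_iff.2 hjs)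

section Fsigma

variable {Y : Type*} [TopologicalSpace Y]

theorem IsFsigma.of_isOpen {Z : Type*} [PseudoEMetricSpace Z] {U : Set Z} (hU : IsOpen U) :
    IsFsigma U := by
  obtain ⟨C, hC, -, hCU, -⟩ := hU.exists_iUnion_isClosed
  exact ⟨C, hC, hCU.symm⟩

theorem IsFsigma.inter {S T : Set Y} (hS : IsFsigma S) (hT : IsFsigma T) :
    IsFsigma (S ∩ T) := by
  obtain ⟨f, hf, rfl⟩ := hS
  obtain ⟨g, hg, rfl⟩ := hT
  refine ⟨fun p => f p.unpair.1 ∩ g p.unpair.2, fun p => (hf _).inter (hg _), ?_⟩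
  ext x
  simp only [mem_inter_iff, mem_iUnion]
  constructor
  · rintro ⟨⟨i, hi⟩, j, hj⟩
    exact ⟨Nat.pair i j, by simpa only [Nat.unpair_pair] using ⟨hi, hj⟩⟩
  · rintro ⟨p, hp⟩
    exact ⟨⟨_, hp.1⟩, _, hp.2⟩

theorem IsFsigmaDelta.inter {S T : Set Y} (hS : IsFsigmaDelta S) (hT : IsFsigmaDelta T) :
    IsFsigmaDelta (S ∩ T) := by
  obtain ⟨f, hf, rfl⟩ := hS
  obtain ⟨g, hg, rfl⟩ := hT
  exact ⟨fun i => f i ∩ g i, fun i => (hf i).inter (hg i), iInter_inter_distrib f g |>.symm⟩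

theorem IsFsigmaDelta.iInter_iUnion_of_isClosed {C : ℕ → ℕ → Set Y}
    (hC : ∀ k m, IsClosed (C k m)) : IsFsigmaDelta (⋂ k, ⋃ m, C k m) :=
  ⟨fun k => ⋃ m, C k m, fun k => ⟨C k, hC k, rfl⟩, rfl⟩

theorem IsFsigmaDelta.iInter_of_isOpen {Z : Type*} [PseudoEMetricSpace Z] {U : ℕ → Set Z}
    (hU : ∀ k, IsOpen (U k)) : IsFsigmaDelta (⋂ k, U k) :=
  ⟨U, fun k => IsFsigma.of_isOpen (hU k), rfl⟩

end Fsigma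

section DerivedSet

variable {X : Type*} [TopologicalSpace X] {A K : Set X}

theorem IsCompact.finite_inter_of_disjoint_derivedSet (hA : IsCompact A) (hK : IsClosed K)
    (h : Disjoint K (derivedSet A)) : (A ∩ K).Finite := by
  refine Set.not_infinite.1 fun hinf => ?_
  obtain ⟨x, hx, hacc⟩ := hinf.exists_accPt_of_subset_isCompact (hA.inter_right hK) subset_rfl
  exact h.notMem_of_mem_left hx.2 (hacc.mono (principal_mono.2 inter_subset_left))

theorem infinite_inter_of_mem_derivedSet [T1Space X] {x : X} {U : Set X}
    (hx : x ∈ derivedSet A) (hU : U ∈ 𝓝 x) : (A ∩ U).Infinite :=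
  inter_comm U A ▸ Set.Infinite.of_accPt (hx.nhds_inter hU)

theorem IsCompact.infinite_iff_derivedSet_nonempty [T1Space X] (hA : IsCompact A) :
    A.Infinite ↔ (derivedSet A).Nonempty := by
  refine ⟨fun h => ?_, fun ⟨x, hx⟩ => Set.Infinite.of_accPt hx⟩
  obtain ⟨x, -, hx⟩ := h.exists_accPt_of_subset_isCompact hA subset_rfl
  exact ⟨x, hx⟩

end DerivedSet

section MetricDerivedSet

variable {X : Type*} [MetricSpace X] {A : Set X}

theorem IsCompact.exists_fin_tuple_finite_of_encard_derivedSet_le (hA : IsCompact A)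
    (hne : A.Nonempty) {n : ℕ} (hn : (derivedSet A).encard ≤ n) {ε : ℝ} (hε : 0 < ε) :
    ∃ f : Fin n → X, (∀ i, f i ∈ A) ∧ (A ∩ {a | ∀ i, ε < dist a (f i)}).Finite := by
  obtain ⟨f, hfA, hf⟩ := exists_fin_tuple_mem_subset_range
    ((isClosed_iff_derivedSet_subset A).1 hA.isClosed) hne hn
  refine ⟨f, hfA, (hA.finite_inter_of_disjoint_derivedSet (K := {a | ∀ i, ε ≤ dist a (f i)})
    ?_ ?_).subset (inter_subset_inter_right _ fun a ha i => (ha i).le)⟩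
  · simp only [ofPred_forall]
    exact isClosed_iInter fun i => isClosed_le continuous_const (by fun_prop)
  · refine disjoint_left.2 fun x hx hxA => ?_
    obtain ⟨i, rfl⟩ := hf hxA
    simpa [hε.not_ge] using hx i

theorem encard_derivedSet_le_of_forall_exists_fin_tuple_finite {n : ℕ}
    (h : ∀ k : ℕ, ∃ f : Fin n → X, (A ∩ {a | ∀ i, 1 / (k + 1 : ℝ) < dist a (f i)}).Finite) :
    (derivedSet A).encard ≤ n := by
  -- `n + 1` points of `A'` have pairwise disjoint neighbourhoods `U y`; for small `ε` each of
  -- them forces some `f i` into its `U y`, which `n` points cannot do.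
  by_contra! hlt
  obtain ⟨t, htA, ht⟩ := exists_subset_encard_eq (Order.add_one_le_of_lt hlt)
  have htfin : t.Finite := finite_of_encard_eq_coe ht
  obtain ⟨U, hU, hUdisj⟩ := htfin.t2_separation
  have hsmall : ∀ᶠ k : ℕ in atTop, ∀ y ∈ t, ball y (2 * (1 / (k + 1 : ℝ))) ⊆ U y := by
    refine htfin.eventually_all.2 fun y _ => ?_
    obtain ⟨ε, hε, hεU⟩ := Metric.isOpen_iff.1 (hU y).2 y (hU y).1
    filter_upwards [tendsto_one_div_add_atTop_nhds_zero_nat.eventually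
      (gt_mem_nhds (half_pos hε))] with k hk
    exact (ball_subset_ball (by linarith)).trans hεU
  obtain ⟨k, hk⟩ := hsmall.exists
  obtain ⟨f, hf⟩ := h k
  have hnear : ∀ y : t, ∃ i, f i ∈ U y := by
    rintro ⟨y, hy⟩
    obtain ⟨a, ⟨haA, hay⟩, hfar⟩ := ((infinite_inter_of_mem_derivedSet (htA hy)
      (ball_mem_nhds y (by positivity : (0 : ℝ) < 1 / (k + 1)))).sdiff hf).nonempty
    obtain ⟨i, hi⟩ : ∃ i, dist a (f i) ≤ 1 / (k + 1 : ℝ) := by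
      by_contra! hall
      exact hfar ⟨haA, hall⟩
    refine ⟨i, hk y hy ?_⟩
    rw [mem_ball] at hay ⊢
    linarith [dist_triangle (f i) a y, dist_comm a (f i)]
  choose g hg using hnear
  have hginj : Function.Injective g := fun y y' hyy' => Subtype.ext <|
    hUdisj.elim y.2 y'.2 (not_disjoint_iff.2 ⟨_, hg y, hyy' ▸ hg y'⟩)
  have hcard : t.encard ≤ n := by simpa using ENat.card_le_card_of_injective hginj
  exact ENat.natCast_lt_succ.not_ge (ht ▸ hcard)

theorem IsCompact.encard_derivedSet_le_iff (hA : IsCompact A) (hne : A.Nonempty) {n : ℕ} :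
    (derivedSet A).encard ≤ n ↔ ∀ k : ℕ, ∃ f : Fin n → X,
      (∀ i, f i ∈ A) ∧ (A ∩ {a | ∀ i, 1 / (k + 1 : ℝ) < dist a (f i)}).Finite :=
  ⟨fun h _ => hA.exists_fin_tuple_finite_of_encard_derivedSet_le hne h Nat.one_div_pos_of_nat,
    fun h => encard_derivedSet_le_of_forall_exists_fin_tuple_finite fun k =>
      (h k).imp fun _ => And.right⟩

theorem IsCompact.derivedSet_subset_iff (hA : IsCompact A) {F : Set X} (hF : IsClosed F)
    (hFne : F.Nonempty) :
    derivedSet A ⊆ F ↔ ∀ k : ℕ, (A ∩ {a | 1 / (k + 1 : ℝ) < infDist a F}).Finite := by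
  refine ⟨fun h k => ?_, fun h p hp => ?_⟩
  · refine (hA.finite_inter_of_disjoint_derivedSet (K := {a | 1 / (k + 1 : ℝ) ≤ infDist a F})
      (isClosed_le continuous_const (continuous_infDist_pt F)) ?_).subset
      (inter_subset_inter_right _ (ofPred_subset_ofPred.2 fun _ => le_of_lt))
    refine disjoint_left.2 fun x hx hxA => ?_
    simp only [mem_ofPred_eq, infDist_zero_of_mem (h hxA)] at hx
    exact Nat.one_div_pos_of_nat.not_ge hx
  · by_contra hpF
    have hpos : 0 < infDist p F := (hF.notMem_iff_infDist_pos hFne).1 hpF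
    obtain ⟨k, hk⟩ := exists_nat_one_div_lt (half_pos hpos)
    refine ((infinite_inter_of_mem_derivedSet hp
      (ball_mem_nhds p (Nat.one_div_pos_of_nat (n := k)))).mono ?_) (h k)
    rintro a ⟨haA, hap⟩
    refine ⟨haA, show 1 / (k + 1 : ℝ) < infDist a F from ?_⟩
    rw [mem_ball] at hap
    linarith [infDist_le_infDist_add_dist (x := p) (y := a) (s := F), dist_comm a p]

end MetricDerivedSet

namespace TopologicalSpace.NonemptyCompacts

variable {X : Type*} [MetricSpace X]

theorem exists_dist_le_dist_of_mem {A B : NonemptyCompacts X} {x : X} (hx : x ∈ A) :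
    ∃ y ∈ B, dist x y ≤ dist A B := by
  obtain ⟨y, hyB, hxy⟩ := B.isCompact.exists_infDist_eq_dist B.nonempty x
  refine ⟨y, hyB, hxy ▸ ?_⟩
  simpa [infDist_zero_of_mem hx, NonemptyCompacts.dist_eq] using
    infDist_le_infDist_add_hausdorffDist (x := x) (edist_ne_top A B)

theorem exists_mem_tendsto_of_tendsto {α : Type*} {l : Filter α} {A : α → NonemptyCompacts X}
    {B : NonemptyCompacts X} (hA : Tendsto A l (𝓝 B)) {x : X} (hx : x ∈ B) :
    ∃ z : α → X, (∀ j, z j ∈ A j) ∧ Tendsto z l (𝓝 x) := by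
  choose z hzA hz using fun j => exists_dist_le_dist_of_mem (B := A j) hx
  refine ⟨z, hzA, tendsto_iff_dist_tendsto_zero.2 <| squeeze_zero (fun _ => dist_nonneg)
    (fun j => (dist_comm (z j) x).trans_le (hz j)) ?_⟩
  simpa only [dist_comm B] using tendsto_iff_dist_tendsto_zero.1 hA

theorem exists_subseq_tendsto_of_tendsto {ι : Type*} [Finite ι] {A : ℕ → NonemptyCompacts X}
    {B : NonemptyCompacts X} (hA : Tendsto A atTop (𝓝 B)) {f : ℕ → ι → X}
    (hf : ∀ j i, f j i ∈ A j) :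
    ∃ g : ι → X, (∀ i, g i ∈ B) ∧ ∃ φ : ℕ → ℕ, StrictMono φ ∧ Tendsto (f ∘ φ) atTop (𝓝 g) := by
  choose g hgB hg using fun j i => exists_dist_le_dist_of_mem (B := B) (hf j i)
  obtain ⟨l, hl, φ, hφ, hgl⟩ := (isCompact_univ_pi fun _ : ι => B.isCompact).tendsto_subseq
    (x := g) fun j => mem_univ_pi.2 (hgB j)
  refine ⟨l, fun i => hl i (mem_univ i), φ, hφ, tendsto_pi_nhds.2 fun i => ?_⟩
  refine (tendsto_pi_nhds.1 hgl i).congr_dist (squeeze_zero (fun _ => dist_nonneg)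
    (fun j => (dist_comm _ _).trans_le (hg (φ j) i)) ?_)
  exact (tendsto_iff_dist_tendsto_zero.1 hA).comp hφ.tendsto_atTop

end TopologicalSpace.NonemptyCompacts

section BoundedTrace

open TopologicalSpace.NonemptyCompacts

variable {X : Type*} [MetricSpace X] {ι : Type*}

variable (ι) in
def boundedTrace (U : (ι → X) → Set X) (m : ℕ) : Set (NonemptyCompacts X) :=
  {A | ∃ f : ι → X, (∀ i, f i ∈ A) ∧ ((A : Set X) ∩ U f).encard ≤ m}

theorem isClosed_boundedTrace [Finite ι] {U : (ι → X) → Set X}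
    (hU : IsOpen {p : (ι → X) × X | p.2 ∈ U p.1}) (m : ℕ) : IsClosed (boundedTrace ι U m) := by
  refine IsSeqClosed.isClosed fun A B hAm hAB => ?_
  choose f hfA hfm using hAm
  obtain ⟨g, hgB, φ, hφ, hfg⟩ := exists_subseq_tendsto_of_tendsto hAB hfA
  -- `m + 1` points of `B ∩ U g` are limits of `m + 1` distinct points of `A (φ j) ∩ U (f (φ j))`.
  refine ⟨g, hgB, not_lt.1 fun hlt => ?_⟩
  obtain ⟨t, htB, ht⟩ := exists_subset_encard_eq (Order.add_one_le_of_lt hlt)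
  have hcount := (finite_of_encard_eq_coe ht).eventually_encard_le
    (s := fun j => (A (φ j) : Set X) ∩ U (f (φ j))) fun y hy => by
    obtain ⟨z, hzA, hz⟩ := exists_mem_tendsto_of_tendsto (hAB.comp hφ.tendsto_atTop) (htB hy).1
    exact ⟨z, hz, (Eventually.of_forall hzA).and <| (hfg.prodMk_nhds hz).eventually
      (hU.mem_nhds (htB hy).2)⟩
  obtain ⟨j, hj⟩ := hcount.exists
  rw [ht] at hj
  exact (hj.trans (hfm (φ j))).not_gt ENat.natCast_lt_succ

theorem iUnion_boundedTrace (U : (ι → X) → Set X) :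
    ⋃ m, boundedTrace ι U m =
      {A : NonemptyCompacts X | ∃ f : ι → X, (∀ i, f i ∈ A) ∧ ((A : Set X) ∩ U f).Finite} := by
  ext A
  simp only [boundedTrace, mem_iUnion, mem_ofPred_eq]
  refine ⟨fun ⟨m, f, hfA, hm⟩ => ⟨f, hfA, finite_of_encard_le_coe hm⟩,
    fun ⟨f, hfA, hfin⟩ => ⟨_, f, hfA, hfin.encard_eq_coe_toFinset_card.le⟩⟩

end BoundedTrace

section HyperspaceComplexity

variable {X : Type*} [MetricSpace X]

theorem isClosed_setOf_encard_le (m : ℕ) :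
    IsClosed {A : NonemptyCompacts X | (A : Set X).encard ≤ m} := by
  convert isClosed_boundedTrace (ι := Fin 0) (U := fun _ => univ) (by simp) m
  simp [boundedTrace]

theorem isFsigmaDelta_setOf_derivedSet_nonempty :
    IsFsigmaDelta {A : NonemptyCompacts X | (derivedSet (A : Set X)).Nonempty} := by
  have heq : {A : NonemptyCompacts X | (derivedSet (A : Set X)).Nonempty} =
      ⋂ m : ℕ, {A : NonemptyCompacts X | (A : Set X).encard ≤ m}ᶜ := by
    ext A
    simp only [mem_iInter, mem_compl_iff, mem_ofPred_eq, not_le, ← encard_eq_top_iff,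
      ← A.isCompact.infinite_iff_derivedSet_nonempty, ENat.eq_top_iff_forall_gt]
  rw [heq]
  exact .iInter_of_isOpen fun m => (isClosed_setOf_encard_le m).isOpen_compl

theorem isFsigmaDelta_setOf_encard_derivedSet_le (n : ℕ) :
    IsFsigmaDelta {A : NonemptyCompacts X | (derivedSet (A : Set X)).encard ≤ n} := by
  have heq : {A : NonemptyCompacts X | (derivedSet (A : Set X)).encard ≤ n} = ⋂ k : ℕ, ⋃ m,
      boundedTrace (Fin n) (fun f => {a | ∀ i, 1 / (k + 1 : ℝ) < dist a (f i)}) m := by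
    ext A
    simp only [mem_iInter, iUnion_boundedTrace, mem_ofPred_eq]
    exact A.isCompact.encard_derivedSet_le_iff A.nonempty
  rw [heq]
  refine .iInter_iUnion_of_isClosed fun k => isClosed_boundedTrace ?_
  simp only [mem_ofPred_eq]
  rw [ofPred_forall]
  exact isOpen_iInter_of_finite fun i => isOpen_lt continuous_const (by fun_prop)

theorem isFsigmaDelta_setOf_derivedSet_subset {F : Set X} (hF : IsClosed F) (hFne : F.Nonempty) :
    IsFsigmaDelta {A : NonemptyCompacts X | derivedSet (A : Set X) ⊆ F} := by
  have heq : {A : NonemptyCompacts X | derivedSet (A : Set X) ⊆ F} = ⋂ k : ℕ, ⋃ m,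
      boundedTrace (Fin 0) (fun _ => {a | 1 / (k + 1 : ℝ) < infDist a F}) m := by
    ext A
    simp only [mem_iInter, iUnion_boundedTrace, mem_ofPred_eq]
    simpa using A.isCompact.derivedSet_subset_iff hF hFne
  rw [heq]
  exact .iInter_iUnion_of_isClosed fun k => isClosed_boundedTrace
    (isOpen_lt continuous_const ((continuous_infDist_pt F).comp continuous_snd))

end HyperspaceComplexity

theorem statement10_general (X : Type*) [MetricSpace X] (n : ℕ)
    (F : NonemptyCompacts X) :
    IsFsigmaDelta (An X n) ∧ IsFsigmaDelta (AnF X n (F : Set X)) := by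
  have hAn : An X n = {A : NonemptyCompacts X | (derivedSet (A : Set X)).Nonempty} ∩
      {A | (derivedSet (A : Set X)).encard ≤ n} := by
    ext A
    exact one_le_ncard_and_ncard_le_iff
  have hAn_Fσδ : IsFsigmaDelta (An X n) := hAn ▸
    isFsigmaDelta_setOf_derivedSet_nonempty.inter (isFsigmaDelta_setOf_encard_derivedSet_le n)
  exact ⟨hAn_Fσδ,
    hAn_Fσδ.inter (isFsigmaDelta_setOf_derivedSet_subset F.isCompact.isClosed F.nonempty)⟩

theorem statement10 (X : Type*) [MetricSpace X] (n : ℕ) (hn : 1 ≤ n)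
    (F : NonemptyCompacts X) :
    IsFsigmaDelta (An X n) ∧ IsFsigmaDelta (AnF X n (F : Set X)) :=
  statement10_general X n F
end

section
/- Let M be a Polish space, let X ⊆ M be an uncountable subset, and let n ≥ 1 be a natural number. If the set 𝒜_n(X) = {A ∈ 𝒦(M) : A ⊆ X and 1 ≤ |A'| ≤ n} is an analytic subset of 𝒦(M), then X is an analytic subset of M; the same holds with 𝒜_n(X) replaced by 𝒜_ω(X) = {A ∈ 𝒦(M) : A ⊆ X and A' is nonempty and finite}. -/
open TopologicalSpace Filter Set

open Metric Topology

lemma myAccPt_iff_closure {M : Type*} [TopologicalSpace M] {x : M} {C : Set M} :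
    AccPt x (𝓟 C) ↔ x ∈ closure (C \ {x}) := by
  have h : 𝓝[≠] x ⊓ 𝓟 C = 𝓝[C \ {x}] x := by
    rw [nhdsWithin, nhdsWithin, inf_assoc, inf_principal, diff_eq, inter_comm]
  rw [mem_closure_iff_nhdsWithin_neBot, AccPt, h]

lemma myDerivedSet_finite {M : Type*} [TopologicalSpace M] [T1Space M] {F : Set M}
    (hF : F.Finite) : derivedSet F = ∅ := by
  ext z
  simp only [mem_empty_iff_false, iff_false]
  intro hz
  have hz' : z ∈ closure (F \ {z}) := myAccPt_iff_closure.1 hz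
  rw [(hF.subset diff_subset).isClosed.closure_eq] at hz'
  exact hz'.2 rfl

lemma myDerivedSet_eq {M : Type*} [MetricSpace M] {x y : M} {u : ℕ → M}
    (hu : Tendsto u atTop (𝓝 y)) (huy : ∀ k, u k ≠ y) :
    derivedSet (insert x (insert y (range u))) = {y} := by
  have hyd : y ∈ derivedSet (insert x (insert y (range u))) := by
    rw [mem_derivedSet, myAccPt_iff_closure]
    refine mem_closure_of_tendsto hu (Eventually.of_forall fun k => ⟨?_, ?_⟩)
    · exact Or.inr (Or.inr ⟨k, rfl⟩)
    · simpa using huy k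
  refine Subset.antisymm ?_ (by simpa using hyd)
  intro z hz
  simp only [mem_singleton_iff]
  by_contra hzy
  have hε : 0 < dist z y := dist_pos.2 hzy
  set ε := dist z y with hεdef
  set F : Set M := insert x (u '' {k | ¬ dist (u k) y < ε / 2}) with hF
  set G : Set M := insert y (u '' {k | dist (u k) y < ε / 2}) with hG
  have hsplit : insert x (insert y (range u)) = F ∪ G := by
    ext m
    simp only [hF, hG, mem_insert_iff, mem_union, mem_image, mem_range, mem_setOf_eq]
    constructor
    · rintro (rfl | rfl | ⟨k, rfl⟩)
      · exact Or.inl (Or.inl rfl)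
      · exact Or.inr (Or.inl rfl)
      · by_cases h : dist (u k) y < ε / 2
        · exact Or.inr (Or.inr ⟨k, h, rfl⟩)
        · exact Or.inl (Or.inr ⟨k, h, rfl⟩)
    · rintro ((rfl | ⟨k, _, rfl⟩) | (rfl | ⟨k, _, rfl⟩)) <;> simp
  rw [hsplit, derivedSet_union] at hz
  rcases hz with hz | hz
  · have hfin : {k | ¬ dist (u k) y < ε / 2}.Finite := by
      obtain ⟨N, hN⟩ := Metric.tendsto_atTop.1 hu (ε / 2) (by linarith)
      exact (Set.finite_Iio N).subset fun k hk => by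
        by_contra h
        exact hk (hN k (le_of_not_gt h))
    rw [myDerivedSet_finite ((hfin.image u).insert x)] at hz
    exact hz
  · have hGsub : G ⊆ Metric.closedBall y (ε / 2) := by
      rintro m (rfl | ⟨k, hk, rfl⟩)
      · simp [Metric.mem_closedBall]; linarith
      · exact Metric.mem_closedBall.2 (le_of_lt hk)
    have : z ∈ Metric.closedBall y (ε / 2) :=
      closure_minimal hGsub Metric.isClosed_closedBall (derivedSet_subset_closure G hz)
    rw [Metric.mem_closedBall] at this
    linarith

lemma myExists_accPt {M : Type*} [TopologicalSpace M] [SecondCountableTopology M] {X : Set M}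
    (hX : ¬ X.Countable) : ∃ y ∈ X, AccPt y (𝓟 X) := by
  by_contra h
  push_neg at h
  apply hX
  have key : ∀ y ∈ X, ∃ t ∈ countableBasis M, y ∈ t ∧ t ∩ X ⊆ {y} := by
    intro y hy
    have h1 := h y hy
    rw [myAccPt_iff_closure, _root_.mem_closure_iff] at h1
    push_neg at h1
    obtain ⟨o, ho, hyo, hoempty⟩ := h1
    obtain ⟨t, ht, hyt, hto⟩ := (isBasis_countableBasis M).exists_subset_of_mem_open hyo ho
    refine ⟨t, ht, hyt, fun m hm => ?_⟩
    by_contra hmy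
    exact (not_nonempty_iff_eq_empty.2 hoempty) ⟨m, hto hm.1, hm.2, hmy⟩
  have hsub : X ⊆ ⋃ t ∈ {t ∈ countableBasis M | (t ∩ X).Subsingleton}, t ∩ X := by
    intro y hy
    obtain ⟨t, ht, hyt, htX⟩ := key y hy
    exact mem_biUnion ⟨ht, fun a ha b hb => by
      rw [htX ha, htX hb]⟩ ⟨hyt, hy⟩
  exact Set.Countable.mono hsub
    (Set.Countable.biUnion ((countable_countableBasis M).mono (sep_subset _ _))
      fun t ht => ht.2.countable)

set_option maxHeartbeats 1000000 in
lemma myMain {M : Type*} [MetricSpace M] [PolishSpace M] {X : Set M}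
    (hX : ¬ X.Countable) (S : Set (NonemptyCompacts M))
    (hS : ∀ (A : NonemptyCompacts M) (y : M), derivedSet (A : Set M) = {y} → A ∈ S)
    (hA : MeasureTheory.AnalyticSet {A : NonemptyCompacts M | (A : Set M) ⊆ X ∧ A ∈ S}) :
    MeasureTheory.AnalyticSet X := by
  obtain ⟨y, hyX, hyacc⟩ := myExists_accPt hX
  obtain ⟨u, huX, hu⟩ := mem_closure_iff_seq_limit.1 (myAccPt_iff_closure.1 hyacc)
  set 𝒜 := {A : NonemptyCompacts M | (A : Set M) ⊆ X ∧ A ∈ S} with h𝒜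
  have hcov : ∀ x ∈ X, ∃ A ∈ 𝒜, x ∈ (A : Set M) := by
    intro x hx
    have hcomp : IsCompact (insert x (insert y (range u))) :=
      (hu.isCompact_insert_range).insert x
    refine ⟨⟨⟨_, hcomp⟩, ⟨x, mem_insert _ _⟩⟩, ⟨?_, hS _ y ?_⟩, mem_insert _ _⟩
    · rintro m (rfl | rfl | ⟨k, rfl⟩)
      · exact hx
      · exact hyX
      · exact (huX k).1
    · exact myDerivedSet_eq hu fun k => by simpa using (huX k).2
  rw [MeasureTheory.AnalyticSet] at hA
  rcases hA with hemp | ⟨f, hf, hrange⟩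
  · exfalso
    apply hX
    have : X = ∅ := by
      rw [eq_empty_iff_forall_notMem]
      intro x hx
      obtain ⟨A, hA𝒜, -⟩ := hcov x hx
      rw [hemp] at hA𝒜
      exact hA𝒜
    simp [this]
  · set T : Set ((ℕ → ℕ) × M) := {p | p.2 ∈ (f p.1 : Set M)} with hTdef
    have hT : IsClosed T := by
      have hc : Continuous fun p : (ℕ → ℕ) × M => infDist p.2 (f p.1 : Set M) :=
        lipschitz_infDist.continuous.comp (continuous_snd.prodMk (hf.comp continuous_fst))
      have hTeq : T = (fun p : (ℕ → ℕ) × M => infDist p.2 (f p.1 : Set M)) ⁻¹' {0} := by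
        ext p
        exact (f p.1).isCompact.isClosed.mem_iff_infDist_zero (f p.1).nonempty
      rw [hTeq]
      exact isClosed_singleton.preimage hc
    have hXeq : X = Prod.snd '' T := by
      ext x
      constructor
      · intro hx
        obtain ⟨A, hA𝒜, hxA⟩ := hcov x hx
        obtain ⟨b, rfl⟩ := show A ∈ range f from hrange ▸ hA𝒜
        exact ⟨(b, x), hxA, rfl⟩
      · rintro ⟨⟨b, x⟩, hp, rfl⟩
        exact (show f b ∈ 𝒜 from hrange ▸ mem_range_self b).1 hp
    rw [hXeq]
    exact hT.analyticSet.image_of_continuous continuous_snd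

theorem statement14 (M : Type*) [MetricSpace M] [PolishSpace M] (X : Set M)
    (hX : ¬ X.Countable) (n : ℕ) (hn : 1 ≤ n) :
    (MeasureTheory.AnalyticSet {A : NonemptyCompacts M | (A : Set M) ⊆ X ∧ A ∈ An M n} →
        MeasureTheory.AnalyticSet X) ∧
    (MeasureTheory.AnalyticSet {A : NonemptyCompacts M | (A : Set M) ⊆ X ∧ A ∈ Aom M} →
        MeasureTheory.AnalyticSet X) := by
  constructor
  · intro h
    refine myMain hX _ (fun A y hy => ?_) h
    exact ⟨by rw [hy, Set.ncard_singleton], by rw [hy, Set.ncard_singleton]; exact hn⟩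
  · intro h
    refine myMain hX _ (fun A y hy => ?_) h
    exact ⟨by rw [hy]; exact singleton_nonempty y, by rw [hy]; exact finite_singleton y⟩
end

section
/- The space P₃ is homeomorphic to ℚ^ℕ. -/
open TopologicalSpace Filter Set

/-!
Reading `x ∈ P₃` along the columns `k ↦ 2ⁿ(2k+1)` (with the unconstrained coordinate `0`
prepended to column `0`) identifies `P₃` with the countable power of the space `E` of
eventually-false binary sequences. Ordered lexicographically after flipping the odd coordinates,
`E` is a countable dense linear order without endpoints, hence order-isomorphic to `ℚ` by Cantor's
theorem. Its order topology is the product topology: open rays are unions of cylinders, and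
cylinders are order-convex, so each point of a cylinder lies in an open interval inside it.
-/

open PiNat Function Topology

section LexCylinder

variable {β : Type*} [LinearOrder β]

theorem exists_forall_cylinder_toLex_lt {a b : ℕ → β} (h : toLex a < toLex b) :
    ∃ n, ∀ a' ∈ cylinder a n, ∀ b' ∈ cylinder b n, toLex a' < toLex b' := by
  obtain ⟨i, hlt, hi⟩ := h
  refine ⟨i + 1, fun a' ha' b' hb' => ⟨i, fun j hj => ?_, ?_⟩⟩
  · exact (ha' j (by omega)).trans ((hlt j hj).trans (hb' j (by omega)).symm)
  · exact (ha' i i.lt_add_one).trans_lt (hi.trans_eq (hb' i i.lt_add_one).symm)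

theorem mem_cylinder_of_toLex_mem_Icc {x a b z : ℕ → β} {n : ℕ} (ha : a ∈ cylinder x n)
    (hb : b ∈ cylinder x n) (hz : toLex z ∈ Icc (toLex a) (toLex b)) : z ∈ cylinder x n := by
  induction n with
  | zero => simp
  | succ n ih =>
    have hzn := ih (cylinder_anti x n.le_succ ha) (cylinder_anti x n.le_succ hb)
    have hagree {w} (hw : w ∈ cylinder x (n + 1)) : ∀ i < n, w i = z i :=
      fun i hi => (hw i (by omega)).trans (hzn i hi).symm
    have hlow : a n ≤ z n := Pi.apply_le_of_toLex hz.1 (hagree ha)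
    have hupp : z n ≤ b n := Pi.apply_le_of_toLex hz.2 fun i hi => (hagree hb i hi).symm
    refine mem_cylinder_iff.2 fun j hj => ?_
    rcases (Nat.lt_succ_iff.1 hj).lt_or_eq with hj | rfl
    · exact hzn j hj
    · exact le_antisymm (hupp.trans_eq (hb j j.lt_add_one))
        ((ha j j.lt_add_one).symm.trans_le hlow)

variable [TopologicalSpace β] [DiscreteTopology β]

theorem isOpen_setOf_toLex_lt :
    IsOpen {p : (ℕ → β) × (ℕ → β) | toLex p.1 < toLex p.2} := by
  refine isOpen_iff_mem_nhds.2 fun p hp => ?_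
  obtain ⟨n, hn⟩ := exists_forall_cylinder_toLex_lt hp
  exact mem_of_superset
    (prod_mem_nhds ((isOpen_cylinder _ p.1 n).mem_nhds (self_mem_cylinder _ n))
      ((isOpen_cylinder _ p.2 n).mem_nhds (self_mem_cylinder _ n)))
    fun q hq => hn q.1 hq.1 q.2 hq.2

end LexCylinder

def flipOdd (x : ℕ → Bool) : ℕ → Bool := fun i => if Even i then x i else !x i

theorem flipOdd_injective : Injective flipOdd := fun x y h => funext fun i => by
  have := congrFun h i
  unfold flipOdd at this
  split_ifs at this <;> simpa using this

theorem continuous_flipOdd : Continuous flipOdd :=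
  continuous_pi fun i => by unfold flipOdd; split_ifs <;> fun_prop

theorem flipOdd_mem_cylinder_iff {x y : ℕ → Bool} {n : ℕ} :
    flipOdd y ∈ cylinder (flipOdd x) n ↔ y ∈ cylinder x n := by
  simp only [mem_cylinder_iff, flipOdd]
  refine forall₂_congr fun i _ => ?_
  split_ifs <;> simp

theorem flipOdd_update_true {x : ℕ → Bool} {m : ℕ} (hm : x m = false) :
    flipOdd (update x m true) = update (flipOdd x) m (!flipOdd x m) := by
  ext i
  rcases eq_or_ne i m with rfl | hi
  · simp [flipOdd, hm]
  · simp [flipOdd, hi]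

/-- A type synonym rather than a subtype, so as not to inherit the pointwise order of
`ℕ → Bool`. -/
def EventuallyFalse : Type := {x : ℕ → Bool // ∀ᶠ k in atTop, x k = false}

namespace EventuallyFalse

instance : TopologicalSpace EventuallyFalse :=
  inferInstanceAs (TopologicalSpace {x : ℕ → Bool // ∀ᶠ k in atTop, x k = false})

noncomputable instance : LinearOrder EventuallyFalse :=
  LinearOrder.lift' (fun x => toLex (flipOdd x.1)) fun _ _ h =>
    Subtype.ext (flipOdd_injective (toLex.injective h))

theorem lt_def {x y : EventuallyFalse} : x < y ↔ toLex (flipOdd x.1) < toLex (flipOdd y.1) :=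
  Iff.rfl

theorem continuous_val : Continuous (Subtype.val : EventuallyFalse → ℕ → Bool) :=
  continuous_subtype_val

instance : Countable EventuallyFalse := by
  have hfin (x : EventuallyFalse) : {i | x.1 i = true}.Finite := by
    simpa [← Nat.cofinite_eq_atTop, eventually_cofinite] using x.2
  refine Injective.countable (f := fun x => (hfin x).toFinset) fun x y h => ?_
  refine Subtype.ext (funext fun i => Bool.eq_iff_iff.2 ?_)
  simpa using congrArg (i ∈ ·) h

instance : Nonempty EventuallyFalse := ⟨⟨fun _ => false, .of_forall fun _ => rfl⟩⟩

def setTrue (x : EventuallyFalse) (m : ℕ) : EventuallyFalse :=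
  ⟨update x.1 m true, (x.2.and (eventually_ne_atTop m)).mono fun _ hk => by
    rw [update_of_ne hk.2, hk.1]⟩

theorem flipOdd_setTrue_mem_cylinder (x : EventuallyFalse) {m n : ℕ} (h : n ≤ m) :
    flipOdd (x.setTrue m).1 ∈ cylinder (flipOdd x.1) n :=
  flipOdd_mem_cylinder_iff.2 (cylinder_anti _ h (update_mem_cylinder _ _ _))

theorem exists_ge_eq_false_flipOdd_eq (x : EventuallyFalse) (n : ℕ) (b : Bool) :
    ∃ m, n ≤ m ∧ x.1 m = false ∧ flipOdd x.1 m = b := by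
  have hx := x.2.and (eventually_ge_atTop n)
  cases b
  · obtain ⟨m, he, hm, hn⟩ := (Nat.frequently_even.and_eventually hx).exists
    exact ⟨m, hn, hm, by simp [flipOdd, he, hm]⟩
  · obtain ⟨m, ho, hm, hn⟩ := (Nat.frequently_odd.and_eventually hx).exists
    exact ⟨m, hn, hm, by simp [flipOdd, Nat.not_even_iff_odd.2 ho, hm]⟩

theorem lt_setTrue {x : EventuallyFalse} {m : ℕ} (hm : x.1 m = false)
    (h : flipOdd x.1 m = false) : x < x.setTrue m := by
  rw [lt_def, setTrue, flipOdd_update_true hm, Pi.lt_toLex_update_self_iff, h]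
  decide

theorem setTrue_lt {x : EventuallyFalse} {m : ℕ} (hm : x.1 m = false)
    (h : flipOdd x.1 m = true) : x.setTrue m < x := by
  rw [lt_def, setTrue, flipOdd_update_true hm, Pi.toLex_update_lt_self_iff, h]
  decide

instance : NoMaxOrder EventuallyFalse where
  exists_gt x := by
    obtain ⟨m, -, hm, h⟩ := x.exists_ge_eq_false_flipOdd_eq 0 false
    exact ⟨_, lt_setTrue hm h⟩

instance : NoMinOrder EventuallyFalse where
  exists_lt x := by
    obtain ⟨m, -, hm, h⟩ := x.exists_ge_eq_false_flipOdd_eq 0 true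
    exact ⟨_, setTrue_lt hm h⟩

instance : DenselyOrdered EventuallyFalse where
  dense x y hxy := by
    obtain ⟨n, hn⟩ := exists_forall_cylinder_toLex_lt hxy
    obtain ⟨m, hnm, hm, h⟩ := x.exists_ge_eq_false_flipOdd_eq n false
    exact ⟨_, lt_setTrue hm h,
      hn _ (x.flipOdd_setTrue_mem_cylinder hnm) _ (self_mem_cylinder _ n)⟩

theorem exists_Ioo_subset_cylinder (x : EventuallyFalse) (n : ℕ) :
    ∃ a c, a < x ∧ x < c ∧ Ioo a c ⊆ Subtype.val ⁻¹' cylinder x.1 n := by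
  obtain ⟨m, hnm, hm, h⟩ := x.exists_ge_eq_false_flipOdd_eq n true
  obtain ⟨m', hnm', hm', h'⟩ := x.exists_ge_eq_false_flipOdd_eq n false
  refine ⟨_, _, setTrue_lt hm h, lt_setTrue hm' h', fun z hz => flipOdd_mem_cylinder_iff.1 ?_⟩
  exact mem_cylinder_of_toLex_mem_Icc (x.flipOdd_setTrue_mem_cylinder hnm)
    (x.flipOdd_setTrue_mem_cylinder hnm') ⟨hz.1.le, hz.2.le⟩

instance : OrderTopology EventuallyFalse := by
  refine ⟨le_antisymm (le_generateFrom ?_) (le_of_nhds_le_nhds fun x => ?_)⟩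
  · have hflip : Continuous fun x : EventuallyFalse => flipOdd x.1 :=
      continuous_flipOdd.comp continuous_val
    rintro _ ⟨a, rfl | rfl⟩
    · exact isOpen_setOf_toLex_lt.preimage (continuous_const.prodMk hflip)
    · exact isOpen_setOf_toLex_lt.preimage (hflip.prodMk continuous_const)
  · rw [show 𝓝 x = comap Subtype.val (𝓝 x.1) from nhds_induced _ _]
    have hbasis := ((isTopologicalBasis_cylinders fun _ ↦ Bool).nhds_hasBasis (a := x.1)).comap
      (Subtype.val : EventuallyFalse → ℕ → Bool)
    refine hbasis.ge_iff.2 fun U ⟨⟨y, n, hU⟩, hxU⟩ => ?_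
    rw [hU, ← mem_cylinder_iff_eq.1 (hU ▸ hxU)]
    obtain ⟨a, c, hax, hxc, hac⟩ := x.exists_Ioo_subset_cylinder n
    let _ := Preorder.topology EventuallyFalse
    have : OrderTopology EventuallyFalse := ⟨rfl⟩
    exact mem_of_superset (Ioo_mem_nhds hax hxc) hac

noncomputable def homeomorphRat : EventuallyFalse ≃ₜ ℚ :=
  (Order.iso_of_countable_dense EventuallyFalse ℚ).some.toHomeomorph

end EventuallyFalse

def reindexCurryHomeomorph {ι κ ν X : Type*} [TopologicalSpace X] (e : ι × κ ≃ ν)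
    (p : (κ → X) → Prop) :
    {x : ν → X // ∀ i, p fun k => x (e (i, k))} ≃ₜ (ι → {y : κ → X // p y}) where
  toFun x i := ⟨fun k => x.1 (e (i, k)), x.2 i⟩
  invFun f := ⟨fun m => (f (e.symm m).1).1 (e.symm m).2, fun i => by simpa using (f i).2⟩
  left_inv x := by ext; simp
  right_inv f := by ext; simp
  continuous_toFun := by
    refine continuous_pi fun i => .subtype_mk (continuous_pi fun k => ?_) _
    exact (continuous_apply _).comp continuous_subtype_val
  continuous_invFun := by
    refine .subtype_mk (continuous_pi fun m => ?_) _
    exact (continuous_apply _).comp (continuous_subtype_val.comp (continuous_apply _))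

theorem two_pow_mul_odd_inj {a b c d : ℕ} (h : 2 ^ a * (2 * b + 1) = 2 ^ c * (2 * d + 1)) :
    a = c ∧ b = d := by
  have hval (n k : ℕ) : padicValNat 2 (2 ^ n * (2 * k + 1)) = n := by
    rw [padicValNat.mul (by positivity) (by omega), padicValNat.prime_pow,
      padicValNat.eq_zero_of_not_dvd (by omega), add_zero]
  obtain rfl : a = c := by rw [← hval a b, h, hval]
  exact ⟨rfl, by simpa using h⟩

/-- Column `n` of `P3` is `k ↦ 2 ^ n * (2 * k + 1)`; the coordinate `0`, on which `P3` puts no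
condition, is prepended to column `0`. -/
def dyadicIndex : ℕ × ℕ → ℕ
  | (0, 0) => 0
  | (0, k + 1) => 2 ^ 0 * (2 * k + 1)
  | (n + 1, k) => 2 ^ (n + 1) * (2 * k + 1)

theorem dyadicIndex_injective : Injective dyadicIndex := by
  rintro ⟨_ | n, _ | k⟩ ⟨_ | n', _ | k'⟩ h
  all_goals first
    | rfl
    | (obtain ⟨h₁, h₂⟩ := two_pow_mul_odd_inj h; simp only [Prod.mk.injEq]; omega)
    | (simp [dyadicIndex, eq_comm (a := 0)] at h <;> simp [h])

theorem dyadicIndex_surjective : Surjective dyadicIndex := by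
  intro m
  rcases eq_or_ne m 0 with rfl | hm
  · exact ⟨(0, 0), rfl⟩
  obtain ⟨_ | n, _, ⟨k, rfl⟩, rfl⟩ := Nat.exists_eq_two_pow_mul_odd hm
  exacts [⟨(0, k + 1), rfl⟩, ⟨(n + 1, k), rfl⟩]

noncomputable def dyadicIndexEquiv : ℕ × ℕ ≃ ℕ :=
  .ofBijective _ ⟨dyadicIndex_injective, dyadicIndex_surjective⟩

theorem mem_P3_iff {x : ℕ → Bool} :
    x ∈ P3 ↔ ∀ n, ∀ᶠ k in atTop, x (dyadicIndexEquiv (n, k)) = false := by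
  refine forall_congr' fun n => ?_
  cases n with
  | zero =>
    conv_rhs => rw [← map_add_atTop_eq_nat 1, eventually_map]
    exact Iff.rfl
  | succ n => rfl

theorem statement15 : Nonempty (↥P3 ≃ₜ (ℕ → ℚ)) :=
  ⟨(Homeomorph.subtype (.refl _) fun _ => mem_P3_iff).trans <|
    (reindexCurryHomeomorph dyadicIndexEquiv _).trans <|
      Homeomorph.piCongrRight fun _ => EventuallyFalse.homeomorphRat⟩
end

section
/- The space S₄ is of the first category in itself (i.e., S₄ is the union of countably many subsets that are nowhere dense in S₄) and is strongly homogeneous: any two nonempty clopen subsets of S₄ are homeomorphic. -/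
open TopologicalSpace Filter Set

/-!
Group the coordinates of `{0,1}^ℕ` into the fibres of the `2`-adic valuation: `S₄` is the set of
points with finitely many `1`s on all but finitely many fibres, and all that matters is that the
fibres are infinite. Changing one coordinate does not leave `S₄`, so the closed sets "`0` on
fibre `a` beyond `m`" are nowhere dense; they cover `S₄`. A basic cylinder of `S₄` is homeomorphic
to `S₄`, by moving the free coordinates along a fibre-preserving bijection `ℕ ≃ [n, ∞)`. An open
set is the disjoint union of the countably many maximal cylinders it contains, and `S₄` itself
splits into infinitely many cylinders (by the position of the first `0`), so `S₄ ≅ Σ ℕ, S₄`,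
which absorbs every nonempty countable sum of copies of `S₄`.
-/

open Function PiNat

namespace Homeomorph

variable {Z ι : Type*} [TopologicalSpace Z]

noncomputable def sigmaOfPairwiseDisjoint {t : ι → Set Z} (hd : Pairwise (Disjoint on t))
    (ho : ∀ i, IsOpen (t i)) : (Σ i, t i) ≃ₜ ⋃ i, t i :=
  (Set.unionEqSigmaOfDisjoint hd).symm.toHomeomorphOfContinuousOpen
    (continuous_sigma fun i => continuous_inclusion (subset_iUnion t i))
    (isOpenMap_sigma.2 fun i => (ho i).isOpenMap_inclusion (subset_iUnion t i))

def sigmaAssoc {α : Type*} {β : α → Type*} (γ : ∀ a, β a → Type*)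
    [∀ a b, TopologicalSpace (γ a b)] :
    (Σ ab : Σ a, β a, γ ab.1 ab.2) ≃ₜ Σ a, Σ b, γ a b where
  toEquiv := Equiv.sigmaAssoc γ
  continuous_toFun := continuous_sigma fun ab =>
    (continuous_sigmaMk.comp continuous_sigmaMk :
      Continuous fun c : γ ab.1 ab.2 => (⟨ab.1, ab.2, c⟩ : Σ a, Σ b, γ a b))
  continuous_invFun := continuous_sigma fun a => continuous_sigma fun b =>
    continuous_sigmaMk (σ := fun ab : Σ a, β a => γ ab.1 ab.2) (i := ⟨a, b⟩)

noncomputable def sigmaCongr {κ : Type*} {X : ι → Type*} {Y : κ → Type*}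
    [∀ i, TopologicalSpace (X i)] [∀ k, TopologicalSpace (Y k)] (e : ι ≃ κ)
    (f : ∀ i, X i ≃ₜ Y (e i)) : (Σ i, X i) ≃ₜ Σ k, Y k :=
  (IsHomeomorph.sigmaMap e.bijective fun i => (f i).isHomeomorph).homeomorph _

end Homeomorph

theorem nonempty_sigma_const_homeomorph {X ι : Type*} [TopologicalSpace X] [Countable ι]
    [Nonempty ι] (e : X ≃ₜ Σ _ : ℕ, X) : Nonempty ((Σ _ : ι, X) ≃ₜ X) := by
  obtain ⟨σ⟩ := nonempty_equiv_of_countable (α := Σ _ : ι, ℕ) (β := ℕ)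
  exact ⟨(Homeomorph.sigmaCongr (Equiv.refl ι) fun _ => e).trans <|
    (Homeomorph.sigmaAssoc fun _ _ => X).symm.trans <|
    (Homeomorph.sigmaCongr σ fun _ => Homeomorph.refl X).trans e.symm⟩

section Cylinders

variable {α : Type*} {s : Set (ℕ → α)} {U : Set s}

/-- Junk value `0` when no cylinder around `z` lies in `U`. -/
noncomputable def cylinderLevel (U : Set s) (z : s) : ℕ :=
  sInf {n | Subtype.val ⁻¹' cylinder (z : ℕ → α) n ⊆ U}

def maximalCylinders (U : Set s) : Set (Set s) :=
  {c | ∃ z ∈ U, c = Subtype.val ⁻¹' cylinder (z : ℕ → α) (cylinderLevel U z)}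

theorem maximalCylinders_countable [Countable α] : (maximalCylinders U).Countable := by
  refine (countable_range fun l : List α => Subtype.val ⁻¹' {y | res y l.length = l}).mono ?_
  rintro _ ⟨z, -, rfl⟩
  exact ⟨res z (cylinderLevel U z), by simp only [res_length, cylinder_eq_res]⟩

variable [TopologicalSpace α] [DiscreteTopology α]

theorem exists_cylinder_subset_of_isOpen (hU : IsOpen U) {z : s} (hz : z ∈ U) :
    ∃ n, Subtype.val ⁻¹' cylinder (z : ℕ → α) n ⊆ U := by
  obtain ⟨O, hO, rfl⟩ := isOpen_induced_iff.mp hU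
  obtain ⟨_, ⟨x, n, rfl⟩, hzc, hcO⟩ :=
    (isTopologicalBasis_cylinders fun _ => α).exists_subset_of_mem_open hz hO
  exact ⟨n, fun y hy => hcO (mem_cylinder_iff_eq.1 hzc ▸ hy)⟩

theorem isNowhereDense_setOf_forall_mem_apply_eq {I : Set ℕ} (hI : I.Infinite) {a b : α}
    (hab : a ≠ b) (hs : ∀ x ∈ s, ∀ i, update x i b ∈ s) :
    IsNowhereDense {y : s | ∀ i ∈ I, (y : ℕ → α) i = a} := by
  have hclosed : IsClosed {y : s | ∀ i ∈ I, (y : ℕ → α) i = a} := by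
    simp only [ofPred_forall]
    exact isClosed_biInter fun i _ =>
      isClosed_eq ((continuous_apply i).comp continuous_subtype_val) continuous_const
  rw [hclosed.isNowhereDense_iff, eq_empty_iff_forall_notMem]
  intro y hy
  obtain ⟨n, hn⟩ := exists_cylinder_subset_of_isOpen isOpen_interior hy
  obtain ⟨i, hiI, hni⟩ := hI.exists_gt n
  have hupdate : update (y : ℕ → α) i b ∈ cylinder (y : ℕ → α) n :=
    cylinder_anti _ hni.le (update_mem_cylinder _ _ _)
  have := interior_subset (s := {y : s | ∀ i ∈ I, (y : ℕ → α) i = a})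
    (hn (a := ⟨_, hs y y.2 i⟩) hupdate) i hiI
  rw [Subtype.coe_mk, update_self] at this
  exact hab this.symm

theorem cylinder_cylinderLevel_subset (hU : IsOpen U) {z : s} (hz : z ∈ U) :
    Subtype.val ⁻¹' cylinder (z : ℕ → α) (cylinderLevel U z) ⊆ U :=
  Nat.sInf_mem (exists_cylinder_subset_of_isOpen hU hz)

theorem cylinder_cylinderLevel_eq (hU : IsOpen U) {z y : s} (hz : z ∈ U)
    (hy : (y : ℕ → α) ∈ cylinder (z : ℕ → α) (cylinderLevel U z)) :
    cylinder (y : ℕ → α) (cylinderLevel U y) = cylinder (z : ℕ → α) (cylinderLevel U z) := by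
  have hcyl : ∀ m ≤ cylinderLevel U z, cylinder (y : ℕ → α) m = cylinder (z : ℕ → α) m :=
    fun m hm => mem_cylinder_iff_eq.1 (cylinder_anti _ hm hy)
  have hmem : cylinderLevel U z ∈ {n | Subtype.val ⁻¹' cylinder (y : ℕ → α) n ⊆ U} := by
    rw [mem_ofPred_eq, hcyl _ le_rfl]
    exact cylinder_cylinderLevel_subset hU hz
  have hle : cylinderLevel U y ≤ cylinderLevel U z := Nat.sInf_le hmem
  have hge : cylinderLevel U z ≤ cylinderLevel U y := by
    apply Nat.sInf_le
    rw [mem_ofPred_eq, ← hcyl _ hle]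
    exact Nat.sInf_mem ⟨_, hmem⟩
  rw [le_antisymm hle hge]
  exact hcyl _ le_rfl

theorem maximalCylinders_pairwiseDisjoint (hU : IsOpen U) :
    (maximalCylinders U).PairwiseDisjoint id := by
  rintro _ ⟨z, hz, rfl⟩ _ ⟨w, hw, rfl⟩ hne
  refine Set.disjoint_left.2 fun y hyz hyw => hne ?_
  rw [← cylinder_cylinderLevel_eq hU hz hyz, cylinder_cylinderLevel_eq hU hw hyw]

theorem sUnion_maximalCylinders (hU : IsOpen U) : ⋃₀ maximalCylinders U = U := by
  refine subset_antisymm (sUnion_subset ?_) fun z hz => ⟨_, ⟨z, hz, rfl⟩, self_mem_cylinder _ _⟩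
  rintro _ ⟨z, hz, rfl⟩
  exact cylinder_cylinderLevel_subset hU hz

theorem isOpen_of_mem_maximalCylinders {c : Set s} (hc : c ∈ maximalCylinders U) : IsOpen c := by
  obtain ⟨z, -, rfl⟩ := hc
  exact (isOpen_cylinder (fun _ => α) _ _).preimage continuous_subtype_val

end Cylinders

theorem exists_fiberwise_equiv_of_finite_compl {α β : Type*} [Countable α] {r : α → β}
    (hr : ∀ b, (r ⁻¹' {b}).Infinite) {A : Set α} (hA : Aᶜ.Finite) :
    ∃ σ : α ≃ A, ∀ a, r (σ a) = r a := by
  have hfiber : ∀ b, Nonempty ({a // r a = b} ≃ {a : A // r a = b}) := fun b => by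
    have : Infinite {a // r a = b} := (hr b).to_subtype
    have : Infinite (r ⁻¹' {b} \ Aᶜ : Set α) := ((hr b).sdiff hA).to_subtype
    have : Infinite {a : A // r a = b} :=
      Infinite.of_injective (fun a : (r ⁻¹' {b} \ Aᶜ : Set α) => ⟨⟨a, not_not.1 a.2.2⟩, a.2.1⟩)
        fun a a' h => Subtype.ext (congrArg (fun c : {a : A // r a = b} => (c : α)) h)
    exact nonempty_equiv_of_countable
  exact ⟨Equiv.ofFiberEquiv (g := r ∘ Subtype.val) fun b => (hfiber b).some,
    Equiv.ofFiberEquiv_map (g := r ∘ Subtype.val) _⟩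

def finiteOnAlmostAllFibers (r : ℕ → ℕ) : Set (ℕ → Bool) :=
  {x | ∀ᶠ n in atTop, {i | r i = n ∧ x i = true}.Finite}

namespace finiteOnAlmostAllFibers

variable {r : ℕ → ℕ} {x : ℕ → Bool}

theorem update_mem (hx : x ∈ finiteOnAlmostAllFibers r) (i : ℕ) (b : Bool) :
    update x i b ∈ finiteOnAlmostAllFibers r :=
  hx.mono fun n hn => (hn.insert i).subset fun j ⟨hj, hjx⟩ => by
    by_cases h : j = i
    · exact Or.inl h
    · exact Or.inr ⟨hj, by rwa [update_of_ne h] at hjx⟩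

theorem comp_mem_iff {τ : ℕ → ℕ} (hτ : Injective τ) (hrτ : ∀ j, r (τ j) = r j)
    (hco : (range τ)ᶜ.Finite) :
    x ∘ τ ∈ finiteOnAlmostAllFibers r ↔ x ∈ finiteOnAlmostAllFibers r := by
  refine eventually_congr (Eventually.of_forall fun n => ?_)
  have hpre : {j | r j = n ∧ (x ∘ τ) j = true} = τ ⁻¹' {i | r i = n ∧ x i = true} := by
    ext j; simp [hrτ]
  rw [hpre]
  refine ⟨fun h => ((h.image τ).union hco).subset fun i hi => ?_, fun h => h.preimage hτ.injOn⟩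
  by_cases hi' : i ∈ range τ
  · obtain ⟨j, rfl⟩ := hi'
    exact Or.inl ⟨j, hi, rfl⟩
  · exact Or.inr hi'

theorem exists_apply_eq_false (hr : ∀ n, (r ⁻¹' {n}).Infinite)
    (hx : x ∈ finiteOnAlmostAllFibers r) : ∃ i, x i = false := by
  obtain ⟨n, hn⟩ := hx.exists
  obtain ⟨i, hi, hix⟩ := ((hr n).sdiff hn).nonempty
  exact ⟨i, Bool.not_eq_true _ ▸ fun h => hix ⟨hi, h⟩⟩

theorem nonempty_cylinder_homeomorph (hr : ∀ n, (r ⁻¹' {n}).Infinite) (x : ℕ → Bool) (n : ℕ) :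
    Nonempty ((Subtype.val ⁻¹' cylinder x n : Set (finiteOnAlmostAllFibers r)) ≃ₜ
      finiteOnAlmostAllFibers r) := by
  obtain ⟨σ, hσ⟩ := exists_fiberwise_equiv_of_finite_compl hr (A := Ici n)
    (by rw [compl_Ici]; exact finite_Iio n)
  set τ : ℕ → ℕ := Subtype.val ∘ σ
  have hτ : Injective τ := Subtype.val_injective.comp σ.injective
  have hco : (range τ)ᶜ.Finite := by
    rw [σ.surjective.range_comp, Subtype.range_coe, compl_Ici]
    exact finite_Iio n
  have hmem (y : ℕ → Bool) := comp_mem_iff (r := r) (x := y) hτ hσ hco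
  let fill (y : ℕ → Bool) (i : ℕ) : Bool := if h : n ≤ i then y (σ.symm ⟨i, h⟩) else x i
  have fill_comp (y : ℕ → Bool) : fill y ∘ τ = y := funext fun j => by
    simp [fill, τ, (σ j).2.out]
  have fill_mem_cylinder (y : ℕ → Bool) : fill y ∈ cylinder x n := fun i hi => by
    simp [fill, not_le.2 hi]
  have fill_comp_of_mem {z : ℕ → Bool} (hz : z ∈ cylinder x n) : fill (z ∘ τ) = z :=
    funext fun i => by
      by_cases h : n ≤ i
      · simp [fill, τ, h]
      · simp [fill, h, hz i (not_le.1 h)]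
  exact ⟨{
    toFun z := ⟨z.1.1 ∘ τ, (hmem _).2 z.1.2⟩
    invFun y := ⟨⟨fill y, (hmem _).1 (by rw [fill_comp]; exact y.2)⟩, fill_mem_cylinder y⟩
    left_inv z := Subtype.ext (Subtype.ext (fill_comp_of_mem z.2))
    right_inv y := Subtype.ext (fill_comp y)
    continuous_toFun := by
      refine Continuous.subtype_mk (continuous_pi fun j => ?_) _
      exact (continuous_apply (τ j)).comp (continuous_subtype_val.comp continuous_subtype_val)
    continuous_invFun := by
      refine (Continuous.subtype_mk (continuous_pi fun i => ?_) _).subtype_mk _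
      by_cases h : n ≤ i
      · simp only [fill, h, dite_true]
        exact (continuous_apply _).comp continuous_subtype_val
      · simp only [fill, h, dite_false]
        exact continuous_const }⟩

theorem nonempty_homeomorph_sigma_nat (hr : ∀ n, (r ⁻¹' {n}).Infinite) :
    Nonempty (finiteOnAlmostAllFibers r ≃ₜ Σ _ : ℕ, finiteOnAlmostAllFibers r) := by
  set P : ℕ → Set (finiteOnAlmostAllFibers r) :=
    fun j => Subtype.val ⁻¹' cylinder (fun i => decide (i < j)) (j + 1)
  have mem_P {y j} : y ∈ P j ↔ (∀ i < j, y.1 i = true) ∧ y.1 j = false := by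
    simp only [P, mem_preimage, mem_cylinder_iff, Nat.lt_succ_iff_lt_or_eq, or_imp, forall_and,
      forall_eq, lt_irrefl, decide_false]
    exact and_congr (forall₂_congr fun i hi => by simp [hi]) Iff.rfl
  have hdisj : Pairwise (Disjoint on P) := by
    refine pairwise_disjoint_on P |>.2 fun j j' hlt => Set.disjoint_left.2 fun y hy hy' => ?_
    have := (mem_P.1 hy').1 j hlt
    rw [(mem_P.1 hy).2] at this
    exact Bool.false_ne_true this
  have hcover : ⋃ j, P j = univ := by
    refine eq_univ_of_forall fun y => mem_iUnion.2 ?_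
    classical
    have hex := exists_apply_eq_false hr y.2
    refine ⟨Nat.find hex, mem_P.2 ⟨fun i hi => ?_, Nat.find_spec hex⟩⟩
    simpa using Nat.find_min hex hi
  exact ⟨(Homeomorph.Set.univ _).symm.trans <| (Homeomorph.setCongr hcover.symm).trans <|
    (Homeomorph.sigmaOfPairwiseDisjoint hdisj fun j =>
      (isOpen_cylinder (fun _ => Bool) _ _).preimage continuous_subtype_val).symm.trans <|
    Homeomorph.sigmaCongr (Equiv.refl ℕ) fun j => (nonempty_cylinder_homeomorph hr _ _).some⟩

theorem nonempty_homeomorph_of_isOpen (hr : ∀ n, (r ⁻¹' {n}).Infinite)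
    {U : Set (finiteOnAlmostAllFibers r)} (hU : IsOpen U) (hne : U.Nonempty) :
    Nonempty (U ≃ₜ finiteOnAlmostAllFibers r) := by
  set C := maximalCylinders U
  have : Countable C := maximalCylinders_countable.to_subtype
  have : Nonempty C := by
    obtain ⟨-, c, hc, -⟩ := (sUnion_maximalCylinders hU ▸ hne : (⋃₀ C).Nonempty)
    exact ⟨⟨c, hc⟩⟩
  have hdisj : Pairwise (Disjoint on fun c : C => (c : Set (finiteOnAlmostAllFibers r))) :=
    fun c c' hne => maximalCylinders_pairwiseDisjoint hU c.2 c'.2 (Subtype.coe_injective.ne hne)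
  have hpiece (c : C) :
      Nonempty ((c : Set (finiteOnAlmostAllFibers r)) ≃ₜ finiteOnAlmostAllFibers r) := by
    obtain ⟨_, ⟨z, -, rfl⟩⟩ := c
    exact nonempty_cylinder_homeomorph hr _ _
  obtain ⟨e⟩ := nonempty_homeomorph_sigma_nat hr
  obtain ⟨absorb⟩ := nonempty_sigma_const_homeomorph (ι := C) e
  have hopen (c : C) : IsOpen (c : Set (finiteOnAlmostAllFibers r)) :=
    isOpen_of_mem_maximalCylinders c.2
  exact ⟨(Homeomorph.setCongr ((sUnion_maximalCylinders hU).symm.trans sUnion_eq_iUnion)).trans <|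
    (Homeomorph.sigmaOfPairwiseDisjoint hdisj hopen).symm.trans <|
    (Homeomorph.sigmaCongr (Equiv.refl C) fun c => (hpiece c).some).trans absorb⟩

theorem stronglyHomogeneous (hr : ∀ n, (r ⁻¹' {n}).Infinite) :
    StronglyHomogeneous (finiteOnAlmostAllFibers r) := fun U V hU hV hU₀ hV₀ => by
  obtain ⟨eU⟩ := nonempty_homeomorph_of_isOpen hr hU.isOpen hU₀
  obtain ⟨eV⟩ := nonempty_homeomorph_of_isOpen hr hV.isOpen hV₀
  exact ⟨eU.trans eV.symm⟩

theorem firstCategoryInItself (hr : ∀ n, (r ⁻¹' {n}).Infinite) :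
    FirstCategoryInItself (finiteOnAlmostAllFibers r) := by
  set E : ℕ × ℕ → Set (finiteOnAlmostAllFibers r) :=
    fun p => {y | ∀ i ∈ r ⁻¹' {p.1} \ Iio p.2, y.1 i = false}
  refine ⟨fun k => E k.unpair, fun k => isNowhereDense_setOf_forall_mem_apply_eq
    ((hr _).sdiff (finite_Iio _)) Bool.false_ne_true fun x hx i => update_mem hx i true, ?_⟩
  refine eq_univ_of_forall fun y => mem_iUnion.2 ?_
  obtain ⟨a, ha⟩ := y.2.exists
  obtain ⟨m, hm⟩ := ha.bddAbove
  refine ⟨Nat.pair a (m + 1), fun i ⟨hi, him⟩ => ?_⟩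
  rw [Nat.unpair_pair] at hi him
  by_contra h
  exact him (Nat.lt_succ_of_le (hm ⟨hi, Bool.not_eq_false _ ▸ h⟩))

end finiteOnAlmostAllFibers

theorem padicValNat_two_pow_mul_odd (n k : ℕ) : padicValNat 2 (2 ^ n * (2 * k + 1)) = n := by
  rw [padicValNat.mul (by positivity) (by omega), padicValNat.prime_pow,
    padicValNat.eq_zero_of_not_dvd (by omega), add_zero]

theorem padicValNat_two_eq_iff {n i : ℕ} (hn : n ≠ 0) :
    padicValNat 2 i = n ↔ ∃ k, 2 ^ n * (2 * k + 1) = i := by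
  refine ⟨fun h => ?_, fun ⟨k, hk⟩ => hk ▸ padicValNat_two_pow_mul_odd n k⟩
  have hi : i ≠ 0 := by rintro rfl; exact hn (h.symm.trans (padicValNat_zero_right 2))
  obtain ⟨a, m, ⟨k, rfl⟩, rfl⟩ := Nat.exists_eq_two_pow_mul_odd hi
  refine ⟨k, ?_⟩
  rw [← h, padicValNat_two_pow_mul_odd]

theorem padicValNat_two_preimage_infinite (n : ℕ) : (padicValNat 2 ⁻¹' {n}).Infinite :=
  (infinite_range_of_injective fun k k' h => by simpa using h).mono
    (range_subset_iff.2 (padicValNat_two_pow_mul_odd n))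

theorem S4_eq_finiteOnAlmostAllFibers : S4 = finiteOnAlmostAllFibers (padicValNat 2) := by
  ext x
  refine eventually_congr ((eventually_ne_atTop 0).mono fun n hn => ?_)
  have himage : {i | padicValNat 2 i = n ∧ x i = true} =
      (fun k => 2 ^ n * (2 * k + 1)) '' {k | x (2 ^ n * (2 * k + 1)) = true} := by
    ext i
    simp only [mem_ofPred_eq, mem_image, padicValNat_two_eq_iff hn]
    exact ⟨fun ⟨⟨k, hk⟩, hx⟩ => ⟨k, hk ▸ hx, hk⟩, fun ⟨k, hx, hk⟩ => ⟨⟨k, hk⟩, hk ▸ hx⟩⟩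
  rw [himage, finite_image_iff (fun k _ k' _ h => by simpa using h), ← Nat.cofinite_eq_atTop]
  simp [eventually_cofinite]

theorem statement16 : FirstCategoryInItself ↥S4 ∧ StronglyHomogeneous ↥S4 := by
  rw [S4_eq_finiteOnAlmostAllFibers]
  exact ⟨finiteOnAlmostAllFibers.firstCategoryInItself padicValNat_two_preimage_infinite,
    finiteOnAlmostAllFibers.stronglyHomogeneous padicValNat_two_preimage_infinite⟩
end

section
/- Let X be a nonempty zero-dimensional separable metric space without isolated points, let n ≥ 1 be a natural number, and let F ∈ 𝒦(X) have at least n elements. Then each of the spaces 𝒜_n(X), 𝒜_ω(X), 𝒜_n(X,F), 𝒜_{ω+1}(X) and ℋ(X) is of the first category in itself, i.e. it is the union of countably many subsets that are nowhere dense in it. -/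
open TopologicalSpace Filter Set

section AuxiliaryLemmas

open Metric

variable {X : Type*} [MetricSpace X]

/-- In a T1 space, a finite set has empty derived set. -/
lemma derivedSet_of_finite_eq_empty {s : Set X} (hs : s.Finite) : derivedSet s = ∅ := by
  ext x
  simp only [Set.mem_empty_iff_false, iff_false]
  intro hx
  rw [mem_derivedSet, accPt_iff_nhds] at hx
  have hclosed : IsClosed (s \ {x}) := (hs.subset Set.diff_subset).isClosed
  have hxmem : x ∈ closure (s \ {x}) := by
    rw [mem_closure_iff_nhds]
    intro U hU
    obtain ⟨y, ⟨hyU, hys⟩, hyx⟩ := hx U hU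
    exact ⟨y, hyU, hys, hyx⟩
  rw [hclosed.closure_eq] at hxmem
  exact hxmem.2 rfl

/-- A closed set with countable derived set is countable (Cantor–Bendixson). -/
lemma countable_of_derivedSet_countable [SecondCountableTopology X] {A : Set X}
    (hA : IsClosed A) (hc : (derivedSet A).Countable) : A.Countable := by
  obtain ⟨V, D, hV, hD, hVD⟩ := exists_countable_union_perfect_of_isClosed hA
  have hDsub : D ⊆ derivedSet A := by
    intro x hx
    have hx' : x ∈ derivedSet D := by
      rw [← perfect_iff_eq_derivedSet.mp hD]; exact hx
    exact derivedSet_mono D A (by rw [hVD]; exact Set.subset_union_right) hx'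
  rw [hVD]
  exact hV.union (hc.mono hDsub)

/-- A nonempty countable compact set has an isolated point (Baire). -/
lemma exists_isolated_point {A : Set X} (hA : IsCompact A) (hne : A.Nonempty)
    (hc : A.Countable) : ∃ x ∈ A, x ∉ derivedSet A := by
  haveI : CompactSpace A := isCompact_iff_compactSpace.mp hA
  haveI : Countable A := hc.to_subtype
  haveI : Nonempty A := hne.to_subtype
  obtain ⟨i, hi⟩ := nonempty_interior_of_iUnion_of_closed
    (f := fun i : A => ({i} : Set A)) (fun i => isClosed_singleton)
    (Set.iUnion_of_singleton A)
  obtain ⟨z, hz⟩ := hi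
  have hz' : z ∈ ({i} : Set A) := interior_subset hz
  rw [Set.mem_singleton_iff] at hz'
  have hi2 : i ∈ interior ({i} : Set A) := hz' ▸ hz
  have hmem : ({i} : Set A) ∈ nhds i := mem_interior_iff_mem_nhds.mp hi2
  rw [nhds_induced, Filter.mem_comap] at hmem
  obtain ⟨U, hU, hUsub⟩ := hmem
  refine ⟨(i : X), i.2, ?_⟩
  intro hacc
  rw [mem_derivedSet, accPt_iff_nhds] at hacc
  obtain ⟨y, ⟨hyU, hyA⟩, hyz⟩ := hacc U hU
  have hmem2 : (⟨y, hyA⟩ : A) ∈ Subtype.val ⁻¹' U := hyU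
  have heq := hUsub hmem2
  rw [Set.mem_singleton_iff] at heq
  exact hyz (congrArg Subtype.val heq)

lemma exists_isolated_of_derivedSet_countable [SecondCountableTopology X]
    (A : NonemptyCompacts X) (hc : (derivedSet (A : Set X)).Countable) :
    ∃ x ∈ (A : Set X), x ∉ derivedSet (A : Set X) :=
  exists_isolated_point A.isCompact A.nonempty
    (countable_of_derivedSet_countable A.isCompact.isClosed hc)

/-- The set of nonempty compacta having a `1/(m+1)`-isolated point. -/
def NmSet (X : Type*) [MetricSpace X] (m : ℕ) : Set (NonemptyCompacts X) :=
  {A | ∃ x ∈ (A : Set X), ∀ y ∈ (A : Set X), y ≠ x → 1 / ((m : ℝ) + 1) ≤ dist x y}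

lemma hausdorffEdist_ne_top (A B : NonemptyCompacts X) :
    EMetric.hausdorffEdist (A : Set X) (B : Set X) ≠ ⊤ :=
  Metric.hausdorffEdist_ne_top_of_nonempty_of_bounded A.nonempty B.nonempty
    A.isCompact.isBounded B.isCompact.isBounded

lemma isClosed_NmSet (m : ℕ) : IsClosed (NmSet X m) := by
  refine IsSeqClosed.isClosed ?_
  intro Ak A hAk hlim
  choose x hx hxprop using hAk
  have hdistlim : Filter.Tendsto (fun k => dist (Ak k) A) atTop (nhds 0) :=
    (tendsto_iff_dist_tendsto_zero).mp hlim
  have hinvlim : Filter.Tendsto (fun k : ℕ => 1 / ((k : ℝ) + 1)) atTop (nhds 0) :=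
    tendsto_one_div_add_atTop_nhds_zero_nat
  -- pick points of A near the x k
  have hex : ∀ k, ∃ a ∈ (A : Set X), dist (x k) a < dist (Ak k) A + 1 / ((k : ℝ) + 1) := by
    intro k
    apply Metric.exists_dist_lt_of_hausdorffDist_lt (hx k) _ (hausdorffEdist_ne_top (Ak k) A)
    rw [← NonemptyCompacts.dist_eq]
    have : (0 : ℝ) < 1 / ((k : ℝ) + 1) := by positivity
    linarith
  choose a ha hdista using hex
  obtain ⟨z, hzA, φ, hφmono, hφtend⟩ := A.isCompact.tendsto_subseq ha
  have hφatTop : Filter.Tendsto φ atTop atTop := hφmono.tendsto_atTop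
  have hxa0 : Filter.Tendsto (fun k => dist (x (φ k)) (a (φ k))) atTop (nhds 0) := by
    apply squeeze_zero (fun k => dist_nonneg) (fun k => (hdista (φ k)).le)
    have h1 := hdistlim.comp hφatTop
    have h2 := hinvlim.comp hφatTop
    simpa using h1.add h2
  have hxlim : Filter.Tendsto (fun k => x (φ k)) atTop (nhds z) := by
    rw [tendsto_iff_dist_tendsto_zero]
    apply squeeze_zero (fun k => dist_nonneg)
      (fun k => dist_triangle (x (φ k)) (a (φ k)) z)
    simpa using hxa0.add ((tendsto_iff_dist_tendsto_zero).mp hφtend)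
  refine ⟨z, hzA, ?_⟩
  intro y hyA hyz
  -- pick points of Ak (φ k) near y
  have hey : ∀ k, ∃ b ∈ (Ak (φ k) : Set X),
      dist b y < dist (Ak (φ k)) A + 1 / ((k : ℝ) + 1) := by
    intro k
    apply Metric.exists_dist_lt_of_hausdorffDist_lt' hyA _ (hausdorffEdist_ne_top (Ak (φ k)) A)
    rw [← NonemptyCompacts.dist_eq]
    have : (0 : ℝ) < 1 / ((k : ℝ) + 1) := by positivity
    linarith
  choose b hb hdistb using hey
  have hblim : Filter.Tendsto b atTop (nhds y) := by
    rw [tendsto_iff_dist_tendsto_zero]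
    apply squeeze_zero (fun k => dist_nonneg) (fun k => (hdistb k).le)
    have h1 := hdistlim.comp hφatTop
    simpa using h1.add hinvlim
  have hdxy : Filter.Tendsto (fun k => dist (x (φ k)) (b k)) atTop (nhds (dist z y)) :=
    hxlim.dist hblim
  have hne : ∀ᶠ k in atTop, b k ≠ x (φ k) := by
    have hpos : (0 : ℝ) < dist z y := dist_pos.mpr (Ne.symm hyz)
    have hbx : Filter.Tendsto (fun k => dist (b k) (x (φ k))) atTop (nhds (dist y z)) :=
      hblim.dist hxlim
    have : ∀ᶠ k in atTop, 0 < dist (b k) (x (φ k)) :=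
      hbx.eventually (eventually_gt_nhds (by rwa [dist_comm] at hpos))
    filter_upwards [this] with k hk
    exact fun h => by simp [h] at hk
  have hineq : ∀ᶠ k in atTop, 1 / ((m : ℝ) + 1) ≤ dist (x (φ k)) (b k) := by
    filter_upwards [hne] with k hk
    exact hxprop (φ k) (b k) (hb k) hk
  exact ge_of_tendsto hdxy hineq

/-- Main lemma: a class of nonempty compacta each of which has an isolated point
and which is stable under adding finitely many points is of the first category in itself. -/
lemma firstCategoryInItself_of_isolated_stable (T : Set (NonemptyCompacts X))
    (hXp : ∀ x : X, Filter.NeBot (nhdsWithin x {x}ᶜ))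
    (h1 : ∀ A ∈ T, ∃ x ∈ (A : Set X), x ∉ derivedSet (A : Set X))
    (h2 : ∀ A ∈ T, ∀ B : NonemptyCompacts X, ∀ s : Set X, s.Finite →
      (B : Set X) = (A : Set X) ∪ s → B ∈ T) :
    FirstCategoryInItself ↥T := by
  refine ⟨fun m => Subtype.val ⁻¹' NmSet X m, fun m => ?_, ?_⟩
  · -- each piece is nowhere dense
    have hcl : IsClosed (Subtype.val ⁻¹' NmSet X m : Set ↥T) :=
      (isClosed_NmSet m).preimage continuous_subtype_val
    rw [hcl.isNowhereDense_iff, Set.eq_empty_iff_forall_notMem]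
    rintro ⟨A, hAT⟩ hmem
    rw [mem_interior_iff_mem_nhds, Metric.mem_nhds_iff] at hmem
    obtain ⟨ε, hε, hball⟩ := hmem
    set δ : ℝ := min ε (1 / ((m : ℝ) + 1)) / 3 with hδdef
    have hminpos : 0 < min ε (1 / ((m : ℝ) + 1)) := lt_min hε (by positivity)
    have hδpos : 0 < δ := by positivity
    have hδε : δ < ε := by
      have h1 : δ ≤ ε / 3 := by
        rw [hδdef]
        exact div_le_div_of_nonneg_right (min_le_left _ _) (by norm_num)
      linarith
    have hδm : δ < 1 / ((m : ℝ) + 1) := by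
      have h1 : δ ≤ (1 / ((m : ℝ) + 1)) / 3 := by
        rw [hδdef]
        exact div_le_div_of_nonneg_right (min_le_right _ _) (by norm_num)
      have : (0 : ℝ) < 1 / ((m : ℝ) + 1) := by positivity
      linarith
    obtain ⟨t, htA, htfin, hcover⟩ := finite_cover_balls_of_compact A.isCompact hδpos
    have hpick : ∀ c : X, ∃ p : X, p ≠ c ∧ dist p c < δ := by
      intro c
      have hne : (Metric.ball c δ ∩ {c}ᶜ).Nonempty := by
        haveI := hXp c
        apply Filter.nonempty_of_mem (f := nhdsWithin c {c}ᶜ)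
        exact Filter.inter_mem (nhdsWithin_le_nhds (Metric.ball_mem_nhds c hδpos))
          self_mem_nhdsWithin
      obtain ⟨p, hp1, hp2⟩ := hne
      exact ⟨p, hp2, Metric.mem_ball.mp hp1⟩
    choose p hp1 hp2 using hpick
    have hsfin : (p '' t).Finite := htfin.image p
    have hBc : IsCompact ((A : Set X) ∪ p '' t) := A.isCompact.union hsfin.isCompact
    set B : NonemptyCompacts X :=
      ⟨⟨(A : Set X) ∪ p '' t, hBc⟩, Set.union_nonempty.mpr (Or.inl A.nonempty)⟩ with hBdef
    have hBcoe : (B : Set X) = (A : Set X) ∪ p '' t := rfl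
    have hBT : B ∈ T := h2 A hAT B (p '' t) hsfin hBcoe
    have hdist : dist B A < ε := by
      rw [NonemptyCompacts.dist_eq]
      have hle : hausdorffDist (B : Set X) (A : Set X) ≤ δ := by
        apply hausdorffDist_le_of_mem_dist hδpos.le
        · rintro w (hwA | ⟨c, hct, rfl⟩)
          · exact ⟨w, hwA, by simpa using hδpos.le⟩
          · exact ⟨c, htA hct, (hp2 c).le⟩
        · intro w hwA
          exact ⟨w, Or.inl hwA, by simpa using hδpos.le⟩
      linarith
    have hBmem : B ∈ NmSet X m := by
      have : (⟨B, hBT⟩ : ↥T) ∈ Metric.ball (⟨A, hAT⟩ : ↥T) ε := by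
        rw [Metric.mem_ball, Subtype.dist_eq]
        exact hdist
      exact hball this
    obtain ⟨w, hwB, hwprop⟩ := hBmem
    rcases hwB with hwA | ⟨c, hct, rfl⟩
    · obtain ⟨c, hct, hwc⟩ : ∃ c ∈ t, w ∈ Metric.ball c δ := by
        simpa using hcover hwA
      by_cases hcw : c = w
      · have hpcw : p c ≠ w := hcw ▸ hp1 c
        have := hwprop (p c) (Or.inr ⟨c, hct, rfl⟩) hpcw
        have hd : dist w (p c) < δ := by
          rw [dist_comm, ← hcw]
          exact hp2 c
        linarith
      · have := hwprop c (Or.inl (htA hct)) hcw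
        have hd : dist w c < δ := Metric.mem_ball.mp hwc
        linarith
    · have := hwprop c (Or.inl (htA hct)) (fun h => hp1 c h.symm)
      have hd : dist (p c) c < δ := hp2 c
      linarith
  · -- the union covers
    rw [Set.eq_univ_iff_forall]
    rintro ⟨A, hAT⟩
    obtain ⟨z, hzA, hz⟩ := h1 A hAT
    rw [mem_derivedSet, accPt_iff_nhds] at hz
    push_neg at hz
    obtain ⟨U, hU, hUp⟩ := hz
    obtain ⟨ε, hε, hballU⟩ := Metric.mem_nhds_iff.mp hU
    obtain ⟨m, hm⟩ := exists_nat_one_div_lt hε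
    refine Set.mem_iUnion.mpr ⟨m, ?_⟩
    refine ⟨z, hzA, ?_⟩
    intro y hyA hyz
    by_contra hlt
    push_neg at hlt
    have : y ∈ Metric.ball z ε := by
      rw [Metric.mem_ball, dist_comm]
      calc dist z y < 1 / ((m : ℝ) + 1) := hlt
        _ < ε := by exact_mod_cast hm
    exact hyz (hUp y ⟨hballU this, hyA⟩)

end AuxiliaryLemmas

theorem statement17 (X : Type*) [MetricSpace X] [Nonempty X] [SeparableSpace X]
    (hX0 : IsTopologicalBasis {s : Set X | IsClopen s})
    (hXp : ∀ x : X, Filter.NeBot (nhdsWithin x {x}ᶜ))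
    (n : ℕ) (hn : 1 ≤ n) (F : NonemptyCompacts X)
    (hF : (n : Cardinal) ≤ Cardinal.mk ↥(F : Set X)) :
    FirstCategoryInItself ↥(An X n) ∧
    FirstCategoryInItself ↥(Aom X) ∧
    FirstCategoryInItself ↥(AnF X n (F : Set X)) ∧
    FirstCategoryInItself ↥(Aom1 X) ∧
    FirstCategoryInItself ↥(HH X) := by
  haveI : SecondCountableTopology X := UniformSpace.secondCountable_of_separable X
  -- derived sets of members of each class are countable
  have hAn : ∀ A ∈ An X n, (derivedSet (A : Set X)).Countable := by
    rintro A ⟨h1, _⟩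
    exact (Set.finite_of_ncard_ne_zero (by omega)).countable
  have hAom : ∀ A ∈ Aom X, (derivedSet (A : Set X)).Countable := fun A hA => hA.2.countable
  have hHH : ∀ A ∈ HH X, (derivedSet (A : Set X)).Countable := by
    intro A hA
    refine hA.mono ?_
    exact (derivedSet_subset_closure _).trans A.isCompact.isClosed.closure_eq.subset
  -- adding finitely many points does not change the derived set
  have hder : ∀ (A B : NonemptyCompacts X) (s : Set X), s.Finite →
      (B : Set X) = (A : Set X) ∪ s → derivedSet (B : Set X) = derivedSet (A : Set X) := by
    intro A B s hs hBs
    rw [hBs, derivedSet_union, derivedSet_of_finite_eq_empty hs, Set.union_empty]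
  refine ⟨?_, ?_, ?_, ?_, ?_⟩
  · exact firstCategoryInItself_of_isolated_stable _ hXp
      (fun A hA => exists_isolated_of_derivedSet_countable A (hAn A hA))
      (fun A hA B s hs hBs => by
        simp only [An, Set.mem_setOf_eq, hder A B s hs hBs] at hA ⊢; exact hA)
  · exact firstCategoryInItself_of_isolated_stable _ hXp
      (fun A hA => exists_isolated_of_derivedSet_countable A (hAom A hA))
      (fun A hA B s hs hBs => by
        simp only [Aom, Set.mem_setOf_eq, hder A B s hs hBs] at hA ⊢; exact hA)
  · exact firstCategoryInItself_of_isolated_stable _ hXp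
      (fun A hA => exists_isolated_of_derivedSet_countable A (hAn A hA.1))
      (fun A hA B s hs hBs => by
        simp only [AnF, An, Set.mem_setOf_eq, hder A B s hs hBs] at hA ⊢; exact hA)
  · exact firstCategoryInItself_of_isolated_stable _ hXp
      (fun A hA => exists_isolated_of_derivedSet_countable A hA.2)
      (fun A hA B s hs hBs => by
        simp only [Aom1, Set.mem_setOf_eq, hder A B s hs hBs] at hA ⊢; exact hA)
  · exact firstCategoryInItself_of_isolated_stable _ hXp
      (fun A hA => exists_isolated_of_derivedSet_countable A (hHH A hA))
      (fun A hA B s hs hBs => by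
        simp only [HH, Set.mem_setOf_eq, hBs] at hA ⊢; exact hA.union hs.countable)
end
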